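/- arXiv:2008.04267 — 5 statements merged into one kernel-verified Lean document; each statement's English description precedes it below -/
import Mathlib

section
/- Let S_1, ..., S_n be i.i.d. real random variables with common c.d.f. F_0, and let P̂_n denote their empirical distribution. Then for all β ∈ (0,1), E[F_0(Quantile(β; P̂_n))] ≥ ⌈nβ⌉/(n+1). -/
open MeasureTheory ProbabilityTheory
open scoped ENNReal

/-- Empirical `β`-quantile of a finite sample: the quantile of the empirical distribution. -/
noncomputable def empQuantile {n : ℕ} (β : ℝ) (v : Fin n → ℝ) : ℝ :=
  sInf {x : ℝ | β ≤ ((Finset.univ.filter (fun i => v i ≤ x)).card : ℝ) / n}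

lemma card_filter_univ_lt {m : ℕ} (c : ℕ) (hc : c ≤ m) :
    (Finset.univ.filter fun i : Fin m => (i : ℕ) < c).card = c := by
  have : (Finset.univ.filter fun i : Fin m => (i : ℕ) < c)
      = Finset.map (Fin.castLEEmb hc) Finset.univ := by
    ext i
    simp only [Finset.mem_filter, Finset.mem_univ, true_and, Finset.mem_map,
      Fin.castLEEmb_apply]
    constructor
    · intro h; exact ⟨⟨(i : ℕ), h⟩, by ext; simp⟩
    · rintro ⟨j, rfl⟩; simpa using j.2
  rw [this, Finset.card_map, Finset.card_univ, Fintype.card_fin]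

lemma card_filter_comp_perm {m : ℕ} (τ : Equiv.Perm (Fin m)) (p : Fin m → Prop)
    [DecidablePred p] :
    (Finset.univ.filter fun i => p (τ i)).card = (Finset.univ.filter p).card := by
  have : Finset.univ.filter (fun i => p (τ i))
      = Finset.map τ.symm.toEmbedding (Finset.univ.filter p) := by
    ext i
    simp only [Finset.mem_filter, Finset.mem_univ, true_and, Finset.mem_map,
      Equiv.coe_toEmbedding]
    constructor
    · intro h; exact ⟨τ i, h, τ.symm_apply_apply i⟩
    · rintro ⟨j, hj, rfl⟩; simpa using hj
  rw [this, Finset.card_map]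

lemma card_low_rank {m k : ℕ} (hk : k ≤ m) (w : Fin m → ℝ) :
    k ≤ (Finset.univ.filter fun j =>
        (Finset.univ.filter fun i => w i < w j).card < k).card := by
  set σ := Tuple.sort w with hσ
  have hmono : Monotone (w ∘ σ) := Tuple.monotone_sort w
  have key : ∀ a : Fin m, (a : ℕ) < k →
      (Finset.univ.filter fun i => w i < w (σ a)).card < k := by
    intro a ha
    have hsub : (Finset.univ.filter fun i => w i < w (σ a))
        ⊆ Finset.univ.filter fun i => ((σ.symm i : Fin m) : ℕ) < (a : ℕ) := by
      intro i hi
      simp only [Finset.mem_filter, Finset.mem_univ, true_and] at hi ⊢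
      by_contra hcon
      push_neg at hcon
      have hle : a ≤ σ.symm i := by exact_mod_cast hcon
      have h2 : w (σ a) ≤ w (σ (σ.symm i)) := hmono hle
      rw [Equiv.apply_symm_apply] at h2
      exact absurd hi (not_lt.mpr h2)
    have h3 := Finset.card_le_card hsub
    have h4 : (Finset.univ.filter fun i => ((σ.symm i : Fin m) : ℕ) < (a : ℕ)).card
        = (a : ℕ) := by
      rw [card_filter_comp_perm σ.symm (fun i => (i : ℕ) < (a : ℕ))]
      exact card_filter_univ_lt (a : ℕ) a.2.le
    omega
  have himg : (Finset.univ.filter fun a : Fin m => (a : ℕ) < k).image σ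
      ⊆ Finset.univ.filter fun j =>
        (Finset.univ.filter fun i => w i < w j).card < k := by
    intro j hj
    simp only [Finset.mem_image, Finset.mem_filter, Finset.mem_univ, true_and] at hj ⊢
    obtain ⟨a, ha, rfl⟩ := hj
    exact key a ha
  calc k = ((Finset.univ.filter fun a : Fin m => (a : ℕ) < k).image σ).card := by
        rw [Finset.card_image_of_injective _ σ.injective, card_filter_univ_lt k hk]
    _ ≤ _ := Finset.card_le_card himg

lemma le_empQuantile_iff {n : ℕ} (hn : 0 < n) {β : ℝ} (hβ0 : 0 < β) (hβ1 : β < 1)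
    (v : Fin n → ℝ) (t : ℝ) :
    t ≤ empQuantile β v ↔
      (Finset.univ.filter fun i => v i < t).card < (⌈(n : ℝ) * β⌉).toNat := by
  have hne : Nonempty (Fin n) := ⟨⟨0, hn⟩⟩
  set k : ℕ := (⌈(n : ℝ) * β⌉).toNat with hkdef
  have hnpos : (0 : ℝ) < n := Nat.cast_pos.mpr hn
  have hceil_pos : 0 < ⌈(n : ℝ) * β⌉ := Int.ceil_pos.mpr (mul_pos hnpos hβ0)
  have hk1 : 1 ≤ k := by omega
  have hkn : k ≤ n := by
    have h1 : ⌈(n : ℝ) * β⌉ ≤ (n : ℤ) := by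
      apply Int.ceil_le.mpr
      push_cast
      nlinarith
    omega
  set A : Set ℝ := {x : ℝ | β ≤ ((Finset.univ.filter (fun i => v i ≤ x)).card : ℝ) / n}
    with hAdef
  have hQ : empQuantile β v = sInf A := rfl
  have hA : ∀ x : ℝ, x ∈ A ↔ k ≤ (Finset.univ.filter (fun i => v i ≤ x)).card := by
    intro x
    simp only [hAdef, Set.mem_setOf_eq]
    rw [le_div_iff₀ hnpos, mul_comm]
    rw [show (((Finset.univ.filter (fun i => v i ≤ x)).card : ℝ))
        = (((Finset.univ.filter (fun i => v i ≤ x)).card : ℤ) : ℝ) by push_cast; ring]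
    rw [← Int.ceil_le, hkdef]
    exact Int.toNat_le.symm
  obtain ⟨i₀, -, hmax⟩ := Finset.exists_max_image Finset.univ v Finset.univ_nonempty
  obtain ⟨i₁, -, hmin⟩ := Finset.exists_min_image Finset.univ v Finset.univ_nonempty
  have hAne : A.Nonempty := by
    refine ⟨v i₀, (hA _).mpr ?_⟩
    have h2 : Finset.univ.filter (fun i => v i ≤ v i₀) = Finset.univ := by
      apply Finset.filter_true_of_mem
      intro i _; exact hmax i (Finset.mem_univ i)
    rw [h2, Finset.card_univ, Fintype.card_fin]; exact hkn
  have hbdd : BddBelow A := by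
    refine ⟨v i₁, fun x hx => ?_⟩
    have hc := (hA x).mp hx
    have hne2 : (Finset.univ.filter (fun i => v i ≤ x)).Nonempty := by
      rw [← Finset.card_pos]; omega
    obtain ⟨i, hi⟩ := hne2
    exact le_trans (hmin i (Finset.mem_univ i)) (Finset.mem_filter.mp hi).2
  have hQA : k ≤ (Finset.univ.filter (fun i => v i ≤ sInf A)).card := by
    by_contra hcon
    push_neg at hcon
    set G := Finset.univ.filter (fun i => sInf A < v i) with hG
    have hGne : G.Nonempty := by
      by_contra hGe
      rw [Finset.not_nonempty_iff_eq_empty] at hGe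
      have h3 : Finset.univ.filter (fun i => v i ≤ sInf A) = Finset.univ := by
        apply Finset.filter_true_of_mem
        intro i _
        by_contra hvi
        have hiG : i ∈ G := by
          rw [hG]
          simp only [Finset.mem_filter, Finset.mem_univ, true_and]
          exact lt_of_not_ge hvi
        rw [hGe] at hiG
        exact absurd hiG (Finset.notMem_empty i)
      rw [h3, Finset.card_univ, Fintype.card_fin] at hcon; omega
    obtain ⟨i₂, hi₂, hminG⟩ := Finset.exists_min_image G v hGne
    have hy : sInf A < v i₂ := (Finset.mem_filter.mp hi₂).2
    obtain ⟨x, hxA, hxy⟩ := (csInf_lt_iff hbdd hAne).mp hy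
    have hsub : Finset.univ.filter (fun i => v i ≤ x)
        ⊆ Finset.univ.filter (fun i => v i ≤ sInf A) := by
      intro i hi
      simp only [Finset.mem_filter, Finset.mem_univ, true_and] at hi ⊢
      by_contra h
      push_neg at h
      have hiG : i ∈ G := by
        rw [hG]; simp only [Finset.mem_filter, Finset.mem_univ, true_and]; exact h
      have := hminG i hiG
      linarith
    have h4 := Finset.card_le_card hsub
    have h5 := (hA x).mp hxA
    omega
  rw [hQ]
  constructor
  · intro ht
    by_contra hcon
    push_neg at hcon
    have hFne : (Finset.univ.filter (fun i => v i < t)).Nonempty := by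
      rw [← Finset.card_pos]; omega
    obtain ⟨i₃, hi₃, hmaxF⟩ := Finset.exists_max_image _ v hFne
    have hx : v i₃ < t := (Finset.mem_filter.mp hi₃).2
    have hsub : Finset.univ.filter (fun i => v i < t)
        ⊆ Finset.univ.filter (fun i => v i ≤ v i₃) := by
      intro i hi
      simp only [Finset.mem_filter, Finset.mem_univ, true_and]
      exact hmaxF i hi
    have hxA : v i₃ ∈ A := (hA _).mpr (le_trans hcon (Finset.card_le_card hsub))
    have := csInf_le hbdd hxA
    linarith
  · intro hcard
    by_contra ht
    push_neg at ht
    have hsub : Finset.univ.filter (fun i => v i ≤ sInf A)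
        ⊆ Finset.univ.filter (fun i => v i < t) := by
      intro i hi
      simp only [Finset.mem_filter, Finset.mem_univ, true_and] at hi ⊢
      linarith
    have := Finset.card_le_card hsub
    omega

lemma pi_rank_bound {m : ℕ} (P₀ : Measure ℝ) [IsProbabilityMeasure P₀] (k : ℕ)
    (hk : k ≤ m + 1) :
    (k : ℝ≥0∞) ≤ ((m + 1 : ℕ) : ℝ≥0∞) *
      Measure.pi (fun _ : Fin (m + 1) => P₀)
        {w | (Finset.univ.filter fun i => w i < w (Fin.last m)).card < k} := by
  set π : Measure (Fin (m + 1) → ℝ) := Measure.pi (fun _ => P₀) with hπ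
  set A : Fin (m + 1) → Set (Fin (m + 1) → ℝ) :=
    fun j => {w | (Finset.univ.filter fun i => w i < w j).card < k} with hAdef
  have hcount : ∀ j : Fin (m + 1),
      Measurable fun w : Fin (m + 1) → ℝ => (Finset.univ.filter fun i => w i < w j).card := by
    intro j
    simp only [Finset.card_filter]
    exact Finset.measurable_sum _ fun i _ => Measurable.ite
      (measurableSet_lt (measurable_pi_apply i) (measurable_pi_apply j))
      measurable_const measurable_const
  have hAmeas : ∀ j, MeasurableSet (A j) := by
    intro j
    have : A j = (fun w : Fin (m + 1) → ℝ =>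
        (Finset.univ.filter fun i => w i < w j).card) ⁻¹' (Set.Iio k) := rfl
    rw [this]
    exact (hcount j) (by trivial)
  -- permutation invariance
  have hperm : ∀ j, π (A j) = π (A (Fin.last m)) := by
    intro j
    set τ : Equiv.Perm (Fin (m + 1)) := Equiv.swap (Fin.last m) j with hτ
    have hmp := MeasureTheory.measurePreserving_piCongrLeft
      (fun _ : Fin (m + 1) => P₀) τ
    set e := MeasurableEquiv.piCongrLeft (fun _ : Fin (m + 1) => ℝ) τ with he
    have happ : ∀ (w : Fin (m + 1) → ℝ) (i : Fin (m + 1)), e w i = w (τ.symm i) := by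
      intro w i
      conv_lhs => rw [show i = τ (τ.symm i) from (τ.apply_symm_apply i).symm]
      rw [he]
      exact Equiv.piCongrLeft_apply_apply (fun _ => ℝ) τ w (τ.symm i)
    have hpre : e ⁻¹' (A j) = A (Fin.last m) := by
      ext w
      simp only [Set.mem_preimage, hAdef, Set.mem_setOf_eq]
      have hτsymm : τ.symm = τ := by rw [hτ]; exact Equiv.symm_swap _ _
      have h1 : ∀ i, e w i = w (τ i) := by
        intro i
        rw [happ w i, hτsymm]
      have hτj : τ j = Fin.last m := by rw [hτ]; exact Equiv.swap_apply_right _ _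
      simp only [h1, hτj]
      rw [card_filter_comp_perm τ (fun i => w i < w (Fin.last m))]
    rw [← hpre]
    rw [hmp.measure_preimage (hAmeas j).nullMeasurableSet]
  -- sum bound
  have hpt : ∀ w : Fin (m + 1) → ℝ,
      (k : ℝ≥0∞) ≤ ∑ j : Fin (m + 1), (A j).indicator (1 : (Fin (m + 1) → ℝ) → ℝ≥0∞) w := by
    intro w
    have h := card_low_rank hk w
    calc (k : ℝ≥0∞)
        ≤ ((Finset.univ.filter fun j : Fin (m + 1) =>
            (Finset.univ.filter fun i => w i < w j).card < k).card : ℝ≥0∞) := by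
          exact_mod_cast h
      _ = ∑ j : Fin (m + 1), (A j).indicator (1 : (Fin (m + 1) → ℝ) → ℝ≥0∞) w := by
          rw [Finset.card_filter, Nat.cast_sum]
          refine Finset.sum_congr rfl fun j _ => ?_
          by_cases hj : (Finset.univ.filter fun i => w i < w j).card < k
          · rw [if_pos hj, Nat.cast_one]
            exact (Set.indicator_of_mem (show w ∈ A j from hj) (1 : (Fin (m + 1) → ℝ) → ℝ≥0∞)).symm
          · rw [if_neg hj, Nat.cast_zero]
            exact (Set.indicator_of_notMem (show w ∉ A j from hj) (1 : (Fin (m + 1) → ℝ) → ℝ≥0∞)).symm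
  have hsum : (k : ℝ≥0∞) ≤ ∑ j : Fin (m + 1), π (A j) := by
    have h1 : ∑ j : Fin (m + 1), π (A j)
        = ∫⁻ w, ∑ j : Fin (m + 1), (A j).indicator (1 : (Fin (m + 1) → ℝ) → ℝ≥0∞) w ∂π := by
      rw [lintegral_finset_sum _ (fun j _ => (measurable_one.indicator (hAmeas j)))]
      refine Finset.sum_congr rfl fun j _ => ?_
      rw [lintegral_indicator_one (hAmeas j)]
    rw [h1]
    calc (k : ℝ≥0∞) = ∫⁻ _, (k : ℝ≥0∞) ∂π := by simp
      _ ≤ _ := lintegral_mono fun w => hpt w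
  calc (k : ℝ≥0∞) ≤ ∑ j : Fin (m + 1), π (A j) := hsum
    _ = ((m + 1 : ℕ) : ℝ≥0∞) * π (A (Fin.last m)) := by
        rw [Finset.sum_congr rfl fun j _ => hperm j]
        rw [Finset.sum_const, Finset.card_univ, Fintype.card_fin, nsmul_eq_mul]
    _ = _ := rfl

/-- for `S₁,…,Sₙ` iid with c.d.f. `F₀` and empirical distribution `P̂ₙ`,
for all `β ∈ (0,1)`, `E[F₀(Quantile(β; P̂ₙ))] ≥ ⌈nβ⌉/(n+1)`. -/
theorem expected_cdf_of_empirical_quantile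
    {Ω : Type*} [MeasurableSpace Ω] (μpr : Measure Ω) [IsProbabilityMeasure μpr]
    (n : ℕ) (hn : 0 < n)
    (P₀ : Measure ℝ) [IsProbabilityMeasure P₀]
    (S : Fin n → Ω → ℝ) (hSmeas : ∀ i, Measurable (S i))
    (hiid : iIndepFun S μpr)
    (hlaw : ∀ i, Measure.map (S i) μpr = P₀)
    (β : ℝ) (hβ : β ∈ Set.Ioo (0 : ℝ) 1) :
    (⌈(n : ℝ) * β⌉ : ℝ) / (n + 1)
      ≤ ∫ ω, (P₀ (Set.Iic (empQuantile β (fun i => S i ω)))).toReal ∂μpr := by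
  obtain ⟨hβ0, hβ1⟩ := hβ
  set k : ℕ := (⌈(n : ℝ) * β⌉).toNat with hkdef
  have hnpos : (0 : ℝ) < n := Nat.cast_pos.mpr hn
  have hceil_pos : 0 < ⌈(n : ℝ) * β⌉ := Int.ceil_pos.mpr (mul_pos hnpos hβ0)
  have hkn : k ≤ n := by
    have h1 : ⌈(n : ℝ) * β⌉ ≤ (n : ℤ) := by
      apply Int.ceil_le.mpr; push_cast; nlinarith
    omega
  have hcast : (⌈(n : ℝ) * β⌉ : ℝ) = (k : ℝ) := by
    rw [hkdef]
    have h := Int.toNat_of_nonneg hceil_pos.le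
    exact_mod_cast h.symm
  set Q : Ω → ℝ := fun ω => empQuantile β (fun i => S i ω) with hQdef
  -- the event B on the product space
  set B : Set (Ω × ℝ) :=
    {p | (Finset.univ.filter fun i => S i p.1 < p.2).card < k} with hBdef
  have hcountB : Measurable fun p : Ω × ℝ =>
      (Finset.univ.filter fun i => S i p.1 < p.2).card := by
    simp only [Finset.card_filter]
    exact Finset.measurable_sum _ fun i _ => Measurable.ite
      (measurableSet_lt ((hSmeas i).comp measurable_fst) measurable_snd)
      measurable_const measurable_const
  have hB : MeasurableSet B := by
    have : B = (fun p : Ω × ℝ =>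
        (Finset.univ.filter fun i => S i p.1 < p.2).card) ⁻¹' (Set.Iio k) := rfl
    rw [this]; exact hcountB (by trivial)
  have hsec : ∀ ω, Prod.mk ω ⁻¹' B = Set.Iic (Q ω) := by
    intro ω
    ext t
    simp only [Set.mem_preimage, hBdef, Set.mem_setOf_eq, Set.mem_Iic]
    exact (le_empQuantile_iff hn hβ0 hβ1 (fun i => S i ω) t).symm
  have hFmeas : Measurable fun ω => P₀ (Set.Iic (Q ω)) := by
    have h := measurable_measure_prodMk_left (ν := P₀) hB
    simpa only [hsec] using h
  have hprodB : (μpr.prod P₀) B = ∫⁻ ω, P₀ (Set.Iic (Q ω)) ∂μpr := by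
    rw [Measure.prod_apply hB]
    exact lintegral_congr fun ω => by rw [hsec ω]
  have hint : ∫ ω, (P₀ (Set.Iic (Q ω))).toReal ∂μpr
      = (∫⁻ ω, P₀ (Set.Iic (Q ω)) ∂μpr).toReal :=
    integral_toReal hFmeas.aemeasurable (ae_of_all _ fun ω => measure_lt_top _ _)
  -- joint law
  set Φ : Ω × ℝ → (Fin (n + 1) → ℝ) :=
    fun p => Fin.snoc (fun i => S i p.1) p.2 with hΦdef
  have hΦ : Measurable Φ := by
    apply measurable_pi_lambda
    intro i
    refine Fin.lastCases ?_ ?_ i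
    · simp only [hΦdef, Fin.snoc_last]
      exact measurable_snd
    · intro j
      simp only [hΦdef, Fin.snoc_castSucc]
      exact (hSmeas j).comp measurable_fst
  have hmap : Measure.map Φ (μpr.prod P₀) = Measure.pi (fun _ : Fin (n + 1) => P₀) := by
    refine (Measure.pi_eq fun s hs => ?_).symm
    rw [Measure.map_apply hΦ (MeasurableSet.univ_pi hs)]
    have hpre : Φ ⁻¹' Set.pi Set.univ s =
        (⋂ i : Fin n, S i ⁻¹' s i.castSucc) ×ˢ s (Fin.last n) := by
      ext p
      simp only [Set.mem_preimage, Set.mem_pi, Set.mem_univ, true_implies,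
        Set.mem_prod, Set.mem_iInter]
      constructor
      · intro h
        refine ⟨fun i => ?_, ?_⟩
        · have := h i.castSucc
          simpa only [hΦdef, Fin.snoc_castSucc] using this
        · have := h (Fin.last n)
          simpa only [hΦdef, Fin.snoc_last] using this
      · intro h i
        refine Fin.lastCases ?_ (fun j => ?_) i
        · simpa only [hΦdef, Fin.snoc_last] using h.2
        · simpa only [hΦdef, Fin.snoc_castSucc] using h.1 j
    rw [hpre, Measure.prod_prod]
    have hSi : ∀ (i : Fin n) (u : Set ℝ), MeasurableSet u → μpr (S i ⁻¹' u) = P₀ u := by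
      intro i u hu
      rw [← hlaw i, Measure.map_apply (hSmeas i) hu]
    have hind := hiid.measure_inter_preimage_eq_mul Finset.univ
      (sets := fun i : Fin n => s i.castSucc) (fun i _ => hs _)
    have hiInter : (⋂ i ∈ Finset.univ, S i ⁻¹' s i.castSucc)
        = ⋂ i : Fin n, S i ⁻¹' s i.castSucc := by
      simp
    rw [hiInter] at hind
    rw [hind]
    have hprodeq : ∏ i : Fin n, μpr (S i ⁻¹' s i.castSucc)
        = ∏ i : Fin n, P₀ (s i.castSucc) :=
      Finset.prod_congr rfl fun i _ => hSi i _ (hs _)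
    rw [hprodeq, Fin.prod_univ_castSucc]
  -- B is the preimage of the rank event
  set Alast : Set (Fin (n + 1) → ℝ) :=
    {w | (Finset.univ.filter fun i => w i < w (Fin.last n)).card < k} with hAdef
  have hAlast : MeasurableSet Alast := by
    have hcnt : Measurable fun w : Fin (n + 1) → ℝ =>
        (Finset.univ.filter fun i => w i < w (Fin.last n)).card := by
      simp only [Finset.card_filter]
      exact Finset.measurable_sum _ fun i _ => Measurable.ite
        (measurableSet_lt (measurable_pi_apply i) (measurable_pi_apply (Fin.last n)))
        measurable_const measurable_const
    have : Alast = (fun w : Fin (n + 1) → ℝ =>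
        (Finset.univ.filter fun i => w i < w (Fin.last n)).card) ⁻¹' (Set.Iio k) := rfl
    rw [this]; exact hcnt (by trivial)
  have hBpre : B = Φ ⁻¹' Alast := by
    ext p
    simp only [hBdef, Set.mem_setOf_eq, Set.mem_preimage, hAdef]
    have hc : (Finset.univ.filter fun i : Fin (n + 1) => Φ p i < Φ p (Fin.last n)).card
        = (Finset.univ.filter fun i : Fin n => S i p.1 < p.2).card := by
      simp only [Finset.card_filter]
      rw [Fin.sum_univ_castSucc]
      simp [hΦdef, Fin.snoc_castSucc, Fin.snoc_last]
    rw [hc]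
  have hμB : (μpr.prod P₀) B = Measure.pi (fun _ : Fin (n + 1) => P₀) Alast := by
    rw [hBpre, ← Measure.map_apply hΦ hAlast, hmap]
  -- the bound
  have hbound := pi_rank_bound (m := n) P₀ k (by omega)
  rw [← hAdef, ← hμB, hprodB] at hbound
  -- finish: convert to reals
  rw [hcast, hint]
  set L : ℝ≥0∞ := ∫⁻ ω, P₀ (Set.Iic (Q ω)) ∂μpr with hLdef
  have hL1 : L ≤ 1 := by
    rw [hLdef]
    calc ∫⁻ ω, P₀ (Set.Iic (Q ω)) ∂μpr ≤ ∫⁻ _, 1 ∂μpr :=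
          lintegral_mono fun ω => prob_le_one
      _ = 1 := by simp
  have hLtop : L ≠ ⊤ := (lt_of_le_of_lt hL1 ENNReal.one_lt_top).ne
  have htR : (k : ℝ) ≤ ((n : ℝ) + 1) * L.toReal := by
    have h2 := ENNReal.toReal_mono (by
      exact ENNReal.mul_ne_top (by simp) hLtop) hbound
    rw [ENNReal.toReal_mul] at h2
    simpa [ENNReal.toReal_add] using h2
  rw [div_le_iff₀ (by positivity)]
  linarith [htR]
end

section
/- For τ ∈ (0,1), the inverse g^{-1}_{f,ρ}(τ) = sup{β ∈ [0,1] : g_{f,ρ}(β) ≤ τ} admits the representation g^{-1}_{f,ρ}(τ) = sup{β ∈ [τ,1] : β f(τ/β) + (1-β) f((1-τ)/(1-β)) ≤ ρ}. -/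
open MeasureTheory

noncomputable def gfr (f : ℝ → ℝ) (ρ β : ℝ) : ℝ :=
  sInf {z : ℝ | z ∈ Set.Icc (0 : ℝ) 1 ∧
    β * f (z / β) + (1 - β) * f ((1 - z) / (1 - β)) ≤ ρ}

noncomputable def gfrInv (f : ℝ → ℝ) (ρ t : ℝ) : ℝ :=
  sSup {β : ℝ | β ∈ Set.Icc (0 : ℝ) 1 ∧ gfr f ρ β ≤ t}

lemma h_self (f : ℝ → ℝ) (hf1 : f 1 = 0) (β : ℝ) :
    β * f (β / β) + (1 - β) * f ((1 - β) / (1 - β)) = 0 := by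
  rcases eq_or_ne β 0 with h0 | h0
  · simp [h0, hf1]
  rcases eq_or_ne β 1 with h1 | h1
  · simp [h1, hf1]
  · rw [div_self h0, div_self (sub_ne_zero.mpr (Ne.symm h1)), hf1]; ring

lemma gfr_le (f : ℝ → ℝ) (ρ β z : ℝ) (hz : z ∈ Set.Icc (0:ℝ) 1)
    (hh : β * f (z / β) + (1 - β) * f ((1 - z) / (1 - β)) ≤ ρ) : gfr f ρ β ≤ z :=
  csInf_le ⟨0, fun w hw => hw.1.1⟩ ⟨hz, hh⟩

lemma main_step (f : ℝ → ℝ) (hconv : ConvexOn ℝ (Set.Ici 0) f) (hf1 : f 1 = 0)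
    (hcont : ContinuousOn f (Set.Ici 0))
    (ρ : ℝ) (hρ : 0 < ρ) (τ : ℝ) (hτ : τ ∈ Set.Ioo (0 : ℝ) 1)
    (β : ℝ) (hβ : β ∈ Set.Icc τ 1) (hle : gfr f ρ β ≤ τ) :
    β * f (τ / β) + (1 - β) * f ((1 - τ) / (1 - β)) ≤ ρ := by
  have hβ0 : 0 < β := lt_of_lt_of_le hτ.1 hβ.1
  set g : ℝ → ℝ := fun z => β * f (z / β) + (1 - β) * f ((1 - z) / (1 - β)) with hg
  set A : Set ℝ := {z : ℝ | z ∈ Set.Icc (0 : ℝ) 1 ∧ g z ≤ ρ} with hA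
  -- continuity of g on [0,1]
  have hc1 : ContinuousOn (fun z : ℝ => β * f (z / β)) (Set.Icc (0:ℝ) 1) := by
    apply continuousOn_const.mul
    apply hcont.comp (continuous_id.div_const β).continuousOn
    intro z hz
    exact Set.mem_Ici.mpr (div_nonneg hz.1 hβ0.le)
  have hc2 : ContinuousOn (fun z : ℝ => (1 - β) * f ((1 - z) / (1 - β))) (Set.Icc (0:ℝ) 1) := by
    rcases hβ.2.lt_or_eq with hlt | heq
    · apply continuousOn_const.mul
      apply hcont.comp ((continuous_const.sub continuous_id).div_const _).continuousOn
      intro z hz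
      simp only [Set.mem_Ici, id_eq, Pi.sub_apply]
      apply div_nonneg <;> linarith [hz.1, hz.2]
    · simp only [heq, sub_self, zero_mul]
      exact continuousOn_const
  have hgc : ContinuousOn g (Set.Icc (0:ℝ) 1) := hc1.add hc2
  have hAclosed : IsClosed A := by
    have : A = Set.Icc (0:ℝ) 1 ∩ g ⁻¹' Set.Iic ρ := rfl
    rw [this]
    exact hgc.preimage_isClosed_of_isClosed isClosed_Icc isClosed_Iic
  have hβA : β ∈ A := ⟨⟨hβ0.le, hβ.2⟩, by rw [hg]; simp only; rw [h_self f hf1]; exact hρ.le⟩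
  have hAne : A.Nonempty := ⟨β, hβA⟩
  have hAbdd : BddBelow A := ⟨0, fun w hw => hw.1.1⟩
  have hmA : sInf A ∈ A := hAclosed.csInf_mem hAne hAbdd
  set m := sInf A with hm
  have hmτ : m ≤ τ := hle
  have hτβ : τ ≤ β := hβ.1
  rcases eq_or_lt_of_le hτβ with heq | hlt
  · rw [← heq] at *
    rw [h_self f hf1]; exact hρ.le
  -- now m ≤ τ < β
  have hd : 0 < β - m := by linarith
  set a : ℝ := (β - τ) / (β - m) with ha_def
  set b : ℝ := (τ - m) / (β - m) with hb_def
  have ha : 0 ≤ a := div_nonneg (by linarith) hd.le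
  have hb : 0 ≤ b := div_nonneg (by linarith) hd.le
  have hab : a + b = 1 := by rw [ha_def, hb_def, ← add_div, div_eq_one_iff_eq hd.ne']; ring
  have ha1 : a ≤ 1 := by linarith
  have hcomb : a * m + b * β = τ := by
    rw [ha_def, hb_def, div_mul_eq_mul_div, div_mul_eq_mul_div, ← add_div,
      div_eq_iff hd.ne']
    ring
  have hm0 : 0 ≤ m := hmA.1.1
  -- first term
  have key1 : β * f (τ / β) ≤ a * (β * f (m / β)) := by
    have harg : τ / β = a * (m / β) + b * 1 := by
      field_simp
      linarith [hcomb]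
    have := hconv.2 (x := m / β) (y := 1) (Set.mem_Ici.mpr (div_nonneg hm0 hβ0.le)) (Set.mem_Ici.mpr zero_le_one)
      ha hb hab
    simp only [smul_eq_mul] at this
    rw [harg]
    calc β * f (a * (m / β) + b * 1) ≤ β * (a * f (m / β) + b * f 1) :=
          mul_le_mul_of_nonneg_left this hβ0.le
      _ = a * (β * f (m / β)) := by rw [hf1]; ring
  -- second term
  have key2 : (1 - β) * f ((1 - τ) / (1 - β)) ≤ a * ((1 - β) * f ((1 - m) / (1 - β))) := by
    rcases hβ.2.lt_or_eq with hlt1 | heq1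
    · have h1β : 0 < 1 - β := by linarith
      have harg : (1 - τ) / (1 - β) = a * ((1 - m) / (1 - β)) + b * 1 := by
        field_simp
        nlinarith [hcomb, hab]
      have hm1 : m ≤ 1 := hmA.1.2
      have := hconv.2 (x := (1 - m) / (1 - β)) (y := 1)
        (Set.mem_Ici.mpr (div_nonneg (by linarith) h1β.le)) (Set.mem_Ici.mpr zero_le_one) ha hb hab
      simp only [smul_eq_mul] at this
      rw [harg]
      calc (1 - β) * f (a * ((1 - m) / (1 - β)) + b * 1)
          ≤ (1 - β) * (a * f ((1 - m) / (1 - β)) + b * f 1) :=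
            mul_le_mul_of_nonneg_left this h1β.le
        _ = a * ((1 - β) * f ((1 - m) / (1 - β))) := by rw [hf1]; ring
    · simp [heq1]
  have hgm : g m ≤ ρ := hmA.2
  have hmul : a * (β * f (m / β) + (1 - β) * f ((1 - m) / (1 - β))) ≤ a * ρ :=
    mul_le_mul_of_nonneg_left hgm ha
  rw [mul_add] at hmul
  nlinarith [key1, key2, hmul]

/-- for `τ ∈ (0,1)`, the inverse admits the representation
`g⁻¹_{f,ρ}(τ) = sup{β ∈ [τ,1] : β f(τ/β) + (1-β) f((1-τ)/(1-β)) ≤ ρ}`. -/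
theorem gfrInv_representation
    (f : ℝ → ℝ) (hconv : ConvexOn ℝ (Set.Ici 0) f) (hf1 : f 1 = 0)
    (hcont : ContinuousOn f (Set.Ici 0))
    (hcoer : Filter.Tendsto (fun z => f z / z) Filter.atTop Filter.atTop)
    (ρ : ℝ) (hρ : 0 < ρ) (τ : ℝ) (hτ : τ ∈ Set.Ioo (0 : ℝ) 1) :
    gfrInv f ρ τ
      = sSup {β : ℝ | β ∈ Set.Icc τ 1 ∧
          β * f (τ / β) + (1 - β) * f ((1 - τ) / (1 - β)) ≤ ρ} := by
  have hτ0 := hτ.1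
  have hτ1 := hτ.2
  set R : Set ℝ := {β : ℝ | β ∈ Set.Icc τ 1 ∧
      β * f (τ / β) + (1 - β) * f ((1 - τ) / (1 - β)) ≤ ρ} with hR
  set L : Set ℝ := {β : ℝ | β ∈ Set.Icc (0:ℝ) 1 ∧ gfr f ρ β ≤ τ} with hL
  have hRL : R ⊆ L := by
    rintro β ⟨hβ, hh⟩
    exact ⟨⟨le_trans hτ0.le hβ.1, hβ.2⟩, gfr_le f ρ β τ ⟨hτ0.le, hτ1.le⟩ hh⟩
  have hτR : τ ∈ R := ⟨⟨le_refl τ, hτ1.le⟩, by rw [h_self f hf1]; exact hρ.le⟩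
  have hLbdd : BddAbove L := ⟨1, fun β hβ => hβ.1.2⟩
  have hRbdd : BddAbove R := ⟨1, fun β hβ => hβ.1.2⟩
  show sSup L = sSup R
  apply le_antisymm
  · apply csSup_le ⟨τ, hRL hτR⟩
    intro β hβ
    rcases le_or_gt β τ with h | h
    · exact le_trans h (le_csSup hRbdd hτR)
    · exact le_csSup hRbdd ⟨⟨h.le, hβ.1.2⟩, main_step f hconv hf1 hcont ρ hρ τ hτ β ⟨h.le, hβ.1.2⟩ hβ.2⟩
  · exact csSup_le_csSup hLbdd ⟨τ, hτR⟩ hRL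
end

section
/- Let Z₁, Z₂ be independent standard normal random variables, β ∈ [-1,1], and τ ∈ ℝ. Then L(Z₁ | Z₁ ≥ τ) stochastically dominates L(βZ₁ + √(1-β²)Z₂ | Z₁ ≥ τ): for all s ∈ ℝ, P(Z₁ ≥ s | Z₁ ≥ τ) ≥ P(βZ₁ + √(1-β²)Z₂ ≥ s | Z₁ ≥ τ). -/
open MeasureTheory ProbabilityTheory
open Real
open scoped Real NNReal ENNReal

lemma aux_gauss_integral {β c : ℝ} (hc : 0 < c) (hβc : β^2 + c^2 = 1) (u : ℝ) :
    ∫ x, gaussianPDFReal 0 1 x * gaussianPDFReal (β*x) (NNReal.mk (c^2) (sq_nonneg c)) u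
      = gaussianPDFReal 0 1 u := by
  have hc2 : (0:ℝ) < 2*c^2 := by positivity
  have hexp : ∀ x : ℝ, gaussianPDFReal 0 1 x * gaussianPDFReal (β*x) (NNReal.mk (c^2) (sq_nonneg c) : ℝ≥0) u
      = ((Real.sqrt (2*π*1))⁻¹ * (Real.sqrt (2*π*c^2))⁻¹ * rexp (-(u-0)^2/(2*1)))
        * rexp (-(1/(2*c^2)) * (x - β*u)^2) := by
    intro x
    simp only [gaussianPDFReal, NNReal.coe_mk, NNReal.coe_one]
    rw [mul_mul_mul_comm, ← Real.exp_add, mul_assoc ((Real.sqrt (2*π*1))⁻¹ * (Real.sqrt (2*π*c^2))⁻¹), ← Real.exp_add]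
    congr 1
    rw [Real.exp_eq_exp]
    field_simp
    ring_nf
    nlinarith [hβc, sq_nonneg x, sq_nonneg u]
  simp only [hexp]
  rw [integral_const_mul,
    integral_sub_right_eq_self (fun x => rexp (-(1/(2*c^2)) * x^2)) (β*u),
    integral_gaussian]
  have h1 : π / (1/(2*c^2)) = 2*π*c^2 := by field_simp
  rw [h1]
  have h2 : Real.sqrt (2*π*c^2) ≠ 0 := by positivity
  simp only [gaussianPDFReal, NNReal.coe_one]
  field_simp

lemma aux_section {β c : ℝ} (hc : 0 < c) (s x : ℝ) :
    gaussianReal 0 1 (Set.Ici ((s - β*x)/c))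
      = gaussianReal (β*x) (NNReal.mk (c^2) (sq_nonneg c) : ℝ≥0) (Set.Ici s) := by
  have h1 : (gaussianReal 0 1).map (c * ·) = gaussianReal 0 (NNReal.mk (c^2) (sq_nonneg c) : ℝ≥0) := by
    simpa using gaussianReal_map_const_mul (μ := 0) (v := 1) c
  have h2 : (gaussianReal 0 (NNReal.mk (c^2) (sq_nonneg c) : ℝ≥0)).map (· + β*x)
      = gaussianReal (β*x) (NNReal.mk (c^2) (sq_nonneg c) : ℝ≥0) := by
    simpa using gaussianReal_map_add_const (μ := 0) (v := (NNReal.mk (c^2) (sq_nonneg c) : ℝ≥0)) (β*x)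
  rw [← h2, ← h1, Measure.map_map (measurable_add_const _) (measurable_const_mul c),
    Measure.map_apply (by fun_prop) measurableSet_Ici]
  congr 1
  ext y
  simp only [Set.mem_preimage, Function.comp_apply, Set.mem_Ici]
  rw [div_le_iff₀ hc]
  constructor <;> intro h <;> nlinarith

lemma aux_law {Ω : Type*} [MeasurableSpace Ω] (μpr : Measure Ω) [IsProbabilityMeasure μpr]
    (Z₁ Z₂ : Ω → ℝ) (hZ₁ : Measurable Z₁) (hZ₂ : Measurable Z₂)
    (hlaw₁ : Measure.map Z₁ μpr = gaussianReal 0 1)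
    (hlaw₂ : Measure.map Z₂ μpr = gaussianReal 0 1)
    (hindep : IndepFun Z₁ Z₂ μpr) {β c : ℝ} (hc : 0 < c) (hβc : β^2 + c^2 = 1) (s : ℝ) :
    μpr {ω | s ≤ β * Z₁ ω + c * Z₂ ω} = gaussianReal 0 1 (Set.Ici s) := by
  set vc : ℝ≥0 := NNReal.mk (c^2) (sq_nonneg c) with hvcdef
  have hvc : vc ≠ 0 := by
    intro h
    have : (vc : ℝ) = 0 := by rw [h]; simp
    simp only [hvcdef, NNReal.coe_mk] at this
    nlinarith
  have hmap : Measure.map (fun ω => (Z₁ ω, Z₂ ω)) μpr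
      = (gaussianReal 0 1).prod (gaussianReal 0 1) := by
    have := (indepFun_iff_map_prod_eq_prod_map_map hZ₁.aemeasurable hZ₂.aemeasurable).mp hindep
    rwa [hlaw₁, hlaw₂] at this
  have hSm : MeasurableSet {p : ℝ × ℝ | s ≤ β * p.1 + c * p.2} :=
    measurableSet_le measurable_const ((measurable_fst.const_mul β).add (measurable_snd.const_mul c))
  have h0 : μpr {ω | s ≤ β * Z₁ ω + c * Z₂ ω}
      = ((gaussianReal 0 1).prod (gaussianReal 0 1)) {p : ℝ × ℝ | s ≤ β * p.1 + c * p.2} := by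
    rw [← hmap, Measure.map_apply (hZ₁.prodMk hZ₂) hSm]
    rfl
  rw [h0, Measure.prod_apply hSm]
  have hsec : ∀ x : ℝ, (Prod.mk x ⁻¹' {p : ℝ × ℝ | s ≤ β * p.1 + c * p.2})
      = Set.Ici ((s - β*x)/c) := by
    intro x
    ext y
    simp only [Set.mem_preimage, Set.mem_setOf_eq, Set.mem_Ici]
    rw [div_le_iff₀ hc]
    constructor <;> intro h <;> nlinarith
  simp_rw [hsec, aux_section hc s, ← hvcdef, gaussianReal_apply _ hvc]
  have hpdfm : Measurable fun p : ℝ × ℝ => gaussianPDF (β * p.1) vc p.2 := by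
    unfold gaussianPDF gaussianPDFReal
    exact ((((measurable_snd.sub (measurable_fst.const_mul β)).pow_const 2).neg.div_const
      _).exp.const_mul _).ennreal_ofReal
  have hpdfu : ∀ x : ℝ, Measurable fun u : ℝ => gaussianPDF (β*x) vc u := by
    intro x
    unfold gaussianPDF gaussianPDFReal
    exact ((((measurable_id.sub_const (β*x)).pow_const 2).neg.div_const
      _).exp.const_mul _).ennreal_ofReal
  have hpdfx : ∀ u : ℝ, Measurable fun x : ℝ => gaussianPDFReal (β*x) vc u := by
    intro u
    unfold gaussianPDFReal
    exact ((((measurable_const.sub (measurable_id.const_mul β)).pow_const 2).neg.div_const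
      _).exp.const_mul _)
  have hinm : Measurable fun x : ℝ => ∫⁻ u in Set.Ici s, gaussianPDF (β*x) vc u :=
    Measurable.lintegral_prod_right' (f := fun p : ℝ × ℝ => gaussianPDF (β * p.1) vc p.2) hpdfm
  rw [gaussianReal_of_var_ne_zero 0 one_ne_zero,
    lintegral_withDensity_eq_lintegral_mul _ (measurable_gaussianPDF 0 1) hinm]
  simp only [Pi.mul_apply]
  have h1 : ∀ x : ℝ, gaussianPDF 0 1 x * ∫⁻ u in Set.Ici s, gaussianPDF (β*x) vc u
      = ∫⁻ u in Set.Ici s, gaussianPDF 0 1 x * gaussianPDF (β*x) vc u :=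
    fun x => (lintegral_const_mul _ (hpdfu x)).symm
  simp only [h1]
  rw [lintegral_lintegral_swap
    (((measurable_gaussianPDF 0 1).comp measurable_fst).mul hpdfm).aemeasurable]
  have key : ∀ u : ℝ, ∫⁻ x, gaussianPDF 0 1 x * gaussianPDF (β*x) vc u = gaussianPDF 0 1 u := by
    intro u
    have hbd : ∀ m : ℝ, gaussianPDFReal m vc u ≤ (Real.sqrt (2*π*vc))⁻¹ := by
      intro m
      unfold gaussianPDFReal
      have : rexp (-(u - m)^2/(2*vc)) ≤ 1 := by
        apply Real.exp_le_one_iff.mpr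
        apply div_nonpos_of_nonpos_of_nonneg (neg_nonpos.mpr (sq_nonneg _))
        positivity
      calc (Real.sqrt (2*π*vc))⁻¹ * rexp (-(u - m)^2/(2*vc))
          ≤ (Real.sqrt (2*π*vc))⁻¹ * 1 := by
            apply mul_le_mul_of_nonneg_left this (by positivity)
        _ = _ := mul_one _
    have hint : Integrable (fun x => gaussianPDFReal 0 1 x * gaussianPDFReal (β*x) vc u) := by
      refine Integrable.mono' ((integrable_gaussianPDFReal 0 1).const_mul
        ((Real.sqrt (2*π*vc))⁻¹)) ?_ ?_
      · exact ((measurable_gaussianPDFReal 0 1).mul (hpdfx u)).aestronglyMeasurable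
      · filter_upwards with x
        rw [Real.norm_eq_abs, abs_of_nonneg (mul_nonneg (gaussianPDFReal_nonneg _ _ _)
          (gaussianPDFReal_nonneg _ _ _)), mul_comm ((Real.sqrt (2*π*vc))⁻¹)]
        exact mul_le_mul_of_nonneg_left (hbd _) (gaussianPDFReal_nonneg _ _ _)
    calc ∫⁻ x, gaussianPDF 0 1 x * gaussianPDF (β*x) vc u
        = ∫⁻ x, ENNReal.ofReal (gaussianPDFReal 0 1 x * gaussianPDFReal (β*x) vc u) := by
          simp_rw [gaussianPDF, ENNReal.ofReal_mul (gaussianPDFReal_nonneg 0 1 _)]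
      _ = ENNReal.ofReal (∫ x, gaussianPDFReal 0 1 x * gaussianPDFReal (β*x) vc u) :=
          (ofReal_integral_eq_lintegral_ofReal hint (ae_of_all _ fun x =>
            mul_nonneg (gaussianPDFReal_nonneg _ _ _) (gaussianPDFReal_nonneg _ _ _))).symm
      _ = gaussianPDF 0 1 u := by rw [aux_gauss_integral hc hβc u]; rfl
  simp only [key]
  exact (withDensity_apply _ measurableSet_Ici).symm


/-- for `Z₁, Z₂` independent standard normals, `β ∈ [-1,1]` and `τ ∈ ℝ`,
`L(Z₁ | Z₁ ≥ τ)` stochastically dominates `L(βZ₁ + √(1-β²)Z₂ | Z₁ ≥ τ)`. -/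
theorem gaussian_conditional_dominance
    {Ω : Type*} [MeasurableSpace Ω] (μpr : Measure Ω) [IsProbabilityMeasure μpr]
    (Z₁ Z₂ : Ω → ℝ) (hZ₁ : Measurable Z₁) (hZ₂ : Measurable Z₂)
    (hlaw₁ : Measure.map Z₁ μpr = ProbabilityTheory.gaussianReal 0 1)
    (hlaw₂ : Measure.map Z₂ μpr = ProbabilityTheory.gaussianReal 0 1)
    (hindep : IndepFun Z₁ Z₂ μpr)
    (β : ℝ) (hβ : β ∈ Set.Icc (-1 : ℝ) 1) (τ : ℝ) :
    ∀ s : ℝ,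
      ProbabilityTheory.cond μpr {ω | τ ≤ Z₁ ω}
          {ω | s ≤ β * Z₁ ω + Real.sqrt (1 - β ^ 2) * Z₂ ω}
        ≤ ProbabilityTheory.cond μpr {ω | τ ≤ Z₁ ω} {ω | s ≤ Z₁ ω} := by
  intro s
  set c : ℝ := Real.sqrt (1 - β ^ 2) with hcdef
  have hβsq : β ^ 2 ≤ 1 := by nlinarith [hβ.1, hβ.2]
  have hc0 : (0:ℝ) ≤ c := Real.sqrt_nonneg _
  have hc2 : c ^ 2 = 1 - β ^ 2 := Real.sq_sqrt (by linarith)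
  have hA : MeasurableSet {ω | τ ≤ Z₁ ω} := by
    have : {ω | τ ≤ Z₁ ω} = Z₁ ⁻¹' Set.Ici τ := rfl
    rw [this]; exact hZ₁ measurableSet_Ici
  -- law of Z₁ on Ici sets
  have hlawIci : ∀ t : ℝ, μpr {ω | t ≤ Z₁ ω} = gaussianReal 0 1 (Set.Ici t) := by
    intro t
    have : {ω | t ≤ Z₁ ω} = Z₁ ⁻¹' Set.Ici t := rfl
    rw [this, ← Measure.map_apply hZ₁ measurableSet_Ici, hlaw₁]
  have hAne : μpr {ω | τ ≤ Z₁ ω} ≠ 0 := by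
    rw [hlawIci τ]
    intro h
    have h2 : volume (Set.Ici τ) = 0 := gaussianReal_absolutelyContinuous' 0 one_ne_zero h
    simp [Real.volume_Ici] at h2
  by_cases hsτ : s ≤ τ
  · -- RHS = 1
    have hAB : {ω | τ ≤ Z₁ ω} ∩ {ω | s ≤ Z₁ ω} = {ω | τ ≤ Z₁ ω} := by
      ext ω; simp only [Set.mem_inter_iff, Set.mem_setOf_eq]
      exact ⟨fun h => h.1, fun h => ⟨h, le_trans hsτ h⟩⟩
    have hrhs : ProbabilityTheory.cond μpr {ω | τ ≤ Z₁ ω} {ω | s ≤ Z₁ ω} = 1 := by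
      rw [cond_apply hA, hAB, ENNReal.inv_mul_cancel hAne (measure_ne_top _ _)]
    rw [hrhs]
    have : IsProbabilityMeasure (μpr[|{ω | τ ≤ Z₁ ω}]) := cond_isProbabilityMeasure hAne
    exact prob_le_one
  · push_neg at hsτ
    have hlawW : μpr {ω | s ≤ β * Z₁ ω + c * Z₂ ω} = gaussianReal 0 1 (Set.Ici s) := by
      rcases eq_or_lt_of_le hc0 with hc | hc
      · -- c = 0, β² = 1
        have hβ1 : β ^ 2 = 1 := by nlinarith [hc2, hc.symm]
        have hset : {ω | s ≤ β * Z₁ ω + c * Z₂ ω} = (fun ω => β * Z₁ ω) ⁻¹' Set.Ici s := by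
          ext ω; simp [← hc]
        rw [hset, ← Measure.map_apply (hZ₁.const_mul β) measurableSet_Ici]
        have hmm : Measure.map (fun ω => β * Z₁ ω) μpr
            = (Measure.map Z₁ μpr).map (β * ·) := by
          rw [Measure.map_map (measurable_const_mul β) hZ₁]
          rfl
        rw [hmm, hlaw₁, gaussianReal_map_const_mul]
        norm_num
        congr 1
        ext
        simp [hβ1]
      · exact aux_law μpr Z₁ Z₂ hZ₁ hZ₂ hlaw₁ hlaw₂ hindep hc (by rw [hc2]; ring) s
    rw [cond_apply hA, cond_apply hA]
    apply mul_le_mul_right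
    have hAB : {ω | τ ≤ Z₁ ω} ∩ {ω | s ≤ Z₁ ω} = {ω | s ≤ Z₁ ω} := by
      ext ω; simp only [Set.mem_inter_iff, Set.mem_setOf_eq]
      exact ⟨fun h => h.2, fun h => ⟨le_trans hsτ.le h, h⟩⟩
    rw [hAB]
    calc μpr ({ω | τ ≤ Z₁ ω} ∩ {ω | s ≤ β * Z₁ ω + c * Z₂ ω})
        ≤ μpr {ω | s ≤ β * Z₁ ω + c * Z₂ ω} := measure_mono Set.inter_subset_right
      _ = gaussianReal 0 1 (Set.Ici s) := hlawW
      _ = μpr {ω | s ≤ Z₁ ω} := (hlawIci s).symm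
end

section
/- Let U = (U₁,U₂) and V = (V₁,V₂) be ℝ²-valued random vectors with U ⪰_uo V in the upper orthant order, U₁ equal in distribution to V₁, and suppose f : ℝ → ℝ₊ is non-negative non-decreasing and g : ℝ → ℝ is non-decreasing (possibly taking negative values) with E|f(U₁)g(U₂)| and E|f(V₁)g(V₂)| finite. Then E[f(V₁)g(V₂)] ≤ E[f(U₁)g(U₂)]. -/
open MeasureTheory

section UpperOrthantAux

open Set ENNReal

lemma upper_rep (S : Set ℝ) (hS : IsUpperSet S) :
    ∃ c : ℕ → Set ℝ, Monotone c ∧ (∀ n, c n = ∅ ∨ ∃ a, c n = Set.Ici a) ∧ S = ⋃ n, c n := by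
  rcases S.eq_empty_or_nonempty with h | hne
  · exact ⟨fun _ => ∅, monotone_const, fun n => Or.inl rfl, by simp [h]⟩
  by_cases hb : BddBelow S
  · set a := sInf S with ha
    have hIoi : Set.Ioi a ⊆ S := fun x hx => by
      obtain ⟨y, hy, hyx⟩ := exists_lt_of_csInf_lt hne hx
      exact hS hyx.le hy
    have hIci : S ⊆ Set.Ici a := fun x hx => csInf_le hb hx
    by_cases haS : a ∈ S
    · refine ⟨fun _ => Set.Ici a, monotone_const, fun n => Or.inr ⟨a, rfl⟩, ?_⟩
      simp only [Set.iUnion_const]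
      exact le_antisymm hIci (hS.Ici_subset haS)
    · have hSo : S = Set.Ioi a := by
        refine le_antisymm (fun x hx => ?_) hIoi
        rcases lt_or_eq_of_le (Set.mem_Ici.1 (hIci hx)) with h | h
        · exact h
        · exact absurd (h ▸ hx) haS
      refine ⟨fun n => Set.Ici (a + 1/(n+1)), ?_, fun n => Or.inr ⟨_, rfl⟩, ?_⟩
      · intro m n hmn
        apply Set.Ici_subset_Ici.2
        have := one_div_le_one_div_of_le (show (0:ℝ) < m+1 by positivity)
          (show ((m:ℝ)+1) ≤ n+1 by exact_mod_cast Nat.succ_le_succ hmn)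
        linarith
      · rw [hSo]
        ext x
        simp only [Set.mem_Ioi, Set.mem_iUnion, Set.mem_Ici]
        constructor
        · intro hx
          obtain ⟨n, hn⟩ := exists_nat_one_div_lt (sub_pos.2 hx)
          exact ⟨n, by linarith⟩
        · rintro ⟨n, hn⟩
          have : (0:ℝ) < 1/(n+1) := by positivity
          linarith
  · refine ⟨fun n => Set.Ici (-(n:ℝ)), ?_, fun n => Or.inr ⟨_, rfl⟩, ?_⟩
    · intro m n hmn
      apply Set.Ici_subset_Ici.2
      simp only [neg_le_neg_iff]
      exact_mod_cast hmn
    · rw [not_bddBelow_iff] at hb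
      ext x
      simp only [Set.mem_iUnion, Set.mem_Ici]
      constructor
      · intro _
        obtain ⟨n, hn⟩ := exists_nat_ge (-x)
        exact ⟨n, by linarith⟩
      · rintro ⟨n, hn⟩
        obtain ⟨y, hy, hyx⟩ := hb (-(n:ℝ))
        exact hS (hyx.le.trans hn) hy

lemma IsUpperSet.measSet {S : Set ℝ} (hS : IsUpperSet S) : MeasurableSet S := by
  obtain ⟨c, _, hcf, rfl⟩ := upper_rep S hS
  exact MeasurableSet.iUnion fun n => by
    rcases hcf n with h | ⟨a, h⟩ <;> rw [h]
    exacts [MeasurableSet.empty, measurableSet_Ici]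

lemma quad_key {Ω : Type*} [MeasurableSpace Ω] (μpr : Measure Ω)
    (U V : Ω → ℝ × ℝ)
    (huo : ∀ t₁ t₂ : ℝ,
      μpr {ω | t₁ ≤ (V ω).1 ∧ t₂ ≤ (V ω).2} ≤ μpr {ω | t₁ ≤ (U ω).1 ∧ t₂ ≤ (U ω).2})
    (S T : Set ℝ) (hS : IsUpperSet S) (hT : IsUpperSet T) :
    μpr {ω | (V ω).1 ∈ S ∧ (V ω).2 ∈ T} ≤ μpr {ω | (U ω).1 ∈ S ∧ (U ω).2 ∈ T} := by
  obtain ⟨c, hc, hcf, hSc⟩ := upper_rep S hS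
  obtain ⟨d, hd, hdf, hTd⟩ := upper_rep T hT
  have hmem : ∀ x y : ℝ, (x ∈ S ∧ y ∈ T) ↔ ∃ n, x ∈ c n ∧ y ∈ d n := by
    intro x y
    constructor
    · rintro ⟨hx, hy⟩
      rw [hSc, mem_iUnion] at hx
      rw [hTd, mem_iUnion] at hy
      obtain ⟨m, hm⟩ := hx
      obtain ⟨k, hk⟩ := hy
      exact ⟨max m k, hc (le_max_left m k) hm, hd (le_max_right m k) hk⟩
    · rintro ⟨n, hx, hy⟩
      exact ⟨hSc ▸ mem_iUnion.2 ⟨n, hx⟩, hTd ▸ mem_iUnion.2 ⟨n, hy⟩⟩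
  have hsetV : {ω | (V ω).1 ∈ S ∧ (V ω).2 ∈ T}
      = ⋃ n, {ω | (V ω).1 ∈ c n ∧ (V ω).2 ∈ d n} := by
    ext ω; simp only [mem_setOf_eq, mem_iUnion]; exact hmem _ _
  have hsetU : {ω | (U ω).1 ∈ S ∧ (U ω).2 ∈ T}
      = ⋃ n, {ω | (U ω).1 ∈ c n ∧ (U ω).2 ∈ d n} := by
    ext ω; simp only [mem_setOf_eq, mem_iUnion]; exact hmem _ _
  have hdirV : Directed (· ⊆ ·) fun n => {ω | (V ω).1 ∈ c n ∧ (V ω).2 ∈ d n} := by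
    apply Monotone.directed_le
    intro m n hmn ω ⟨h1, h2⟩
    exact ⟨hc hmn h1, hd hmn h2⟩
  have hdirU : Directed (· ⊆ ·) fun n => {ω | (U ω).1 ∈ c n ∧ (U ω).2 ∈ d n} := by
    apply Monotone.directed_le
    intro m n hmn ω ⟨h1, h2⟩
    exact ⟨hc hmn h1, hd hmn h2⟩
  rw [hsetV, hsetU, hdirV.measure_iUnion, hdirU.measure_iUnion]
  apply iSup_mono
  intro n
  rcases hcf n with h | ⟨a, h⟩
  · simp [h]
  rcases hdf n with h' | ⟨b, h'⟩
  · simp [h']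
  rw [h, h']
  exact huo a b

lemma quad_key2 {Ω : Type*} [MeasurableSpace Ω] (μpr : Measure Ω) [IsProbabilityMeasure μpr]
    (U V : Ω → ℝ × ℝ) (hU : Measurable U) (hV : Measurable V)
    (huo : ∀ t₁ t₂ : ℝ,
      μpr {ω | t₁ ≤ (V ω).1 ∧ t₂ ≤ (V ω).2} ≤ μpr {ω | t₁ ≤ (U ω).1 ∧ t₂ ≤ (U ω).2})
    (hmarg : Measure.map (fun ω => (U ω).1) μpr = Measure.map (fun ω => (V ω).1) μpr)
    (S T : Set ℝ) (hS : IsUpperSet S) (hT : IsLowerSet T) :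
    μpr {ω | (U ω).1 ∈ S ∧ (U ω).2 ∈ T} ≤ μpr {ω | (V ω).1 ∈ S ∧ (V ω).2 ∈ T} := by
  have hTc : IsUpperSet Tᶜ := hT.compl
  have hTm : MeasurableSet T := (compl_compl T ▸ hTc.measSet.compl)
  have hSm : MeasurableSet S := hS.measSet
  have split : ∀ (W : Ω → ℝ × ℝ), Measurable W →
      μpr {ω | (W ω).1 ∈ S ∧ (W ω).2 ∈ T} + μpr {ω | (W ω).1 ∈ S ∧ (W ω).2 ∈ Tᶜ}
        = μpr {ω | (W ω).1 ∈ S} := by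
    intro W hW
    have hB : MeasurableSet {ω | (W ω).2 ∈ T} :=
      (hW.snd.comp measurable_id) |>.comp measurable_id |> fun _ => hTm.preimage (measurable_snd.comp hW)
    have h1 : {ω | (W ω).1 ∈ S ∧ (W ω).2 ∈ T} = {ω | (W ω).1 ∈ S} ∩ {ω | (W ω).2 ∈ T} := rfl
    have h2 : {ω | (W ω).1 ∈ S ∧ (W ω).2 ∈ Tᶜ} = {ω | (W ω).1 ∈ S} \ {ω | (W ω).2 ∈ T} := rfl
    rw [h1, h2, measure_inter_add_diff _ hB]
  have hmargS : μpr {ω | (U ω).1 ∈ S} = μpr {ω | (V ω).1 ∈ S} := by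
    have h1 : μpr {ω | (U ω).1 ∈ S} = Measure.map (fun ω => (U ω).1) μpr S := by
      rw [Measure.map_apply (hU.fst) hSm]; rfl
    have h2 : μpr {ω | (V ω).1 ∈ S} = Measure.map (fun ω => (V ω).1) μpr S := by
      rw [Measure.map_apply (hV.fst) hSm]; rfl
    rw [h1, h2, hmarg]
  have hVc := quad_key μpr U V huo S Tᶜ hS hTc
  have hsU := split U hU
  have hsV := split V hV
  have hfin : μpr {ω | (V ω).1 ∈ S ∧ (V ω).2 ∈ Tᶜ} ≠ ⊤ := measure_ne_top _ _
  have key : μpr {ω | (U ω).1 ∈ S ∧ (U ω).2 ∈ T} + μpr {ω | (V ω).1 ∈ S ∧ (V ω).2 ∈ Tᶜ}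
      ≤ μpr {ω | (V ω).1 ∈ S ∧ (V ω).2 ∈ T} + μpr {ω | (V ω).1 ∈ S ∧ (V ω).2 ∈ Tᶜ} := by
    calc μpr {ω | (U ω).1 ∈ S ∧ (U ω).2 ∈ T} + μpr {ω | (V ω).1 ∈ S ∧ (V ω).2 ∈ Tᶜ}
        ≤ μpr {ω | (U ω).1 ∈ S ∧ (U ω).2 ∈ T} + μpr {ω | (U ω).1 ∈ S ∧ (U ω).2 ∈ Tᶜ} := by
          gcongr
      _ = μpr {ω | (U ω).1 ∈ S} := hsU
      _ = μpr {ω | (V ω).1 ∈ S} := hmargS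
      _ = _ := hsV.symm
  exact (ENNReal.add_le_add_iff_right hfin).1 key

noncomputable def nu : Measure (ℝ × ℝ) :=
  (volume.restrict (Set.Ioi (0:ℝ))).prod (volume.restrict (Set.Ioi (0:ℝ)))

instance : SFinite nu := by unfold nu; infer_instance

lemma nu_prod (a b : ℝ) : nu (Set.Iio a ×ˢ Set.Iio b) = ENNReal.ofReal a * ENNReal.ofReal b := by
  rw [nu, Measure.prod_prod, Measure.restrict_apply measurableSet_Iio,
    Measure.restrict_apply measurableSet_Iio, Set.Iio_inter_Ioi, Set.Iio_inter_Ioi,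
    Real.volume_Ioo, Real.volume_Ioo, sub_zero, sub_zero]

lemma lint_rep {Ω : Type*} [MeasurableSpace Ω] (μ : Measure Ω) [IsProbabilityMeasure μ]
    (W : Ω → ℝ × ℝ) (hW : Measurable W) (f g : ℝ → ℝ) (hf : Measurable f) (hg : Measurable g) :
    ∫⁻ ω, ENNReal.ofReal (f (W ω).1) * ENNReal.ofReal (g (W ω).2) ∂μ
      = ∫⁻ p : ℝ × ℝ, μ {ω | p.1 < f (W ω).1 ∧ p.2 < g (W ω).2} ∂nu := by
  set A : Set (Ω × (ℝ × ℝ)) := {q | q.2.1 < f (W q.1).1 ∧ q.2.2 < g (W q.1).2} with hA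
  have hAm : MeasurableSet A := by
    apply MeasurableSet.inter
    · exact measurableSet_lt (measurable_fst.comp measurable_snd)
        ((hf.comp (measurable_fst.comp hW)).comp measurable_fst)
    · exact measurableSet_lt (measurable_snd.comp measurable_snd)
        ((hg.comp (measurable_snd.comp hW)).comp measurable_fst)
  set F : Ω → (ℝ × ℝ) → ℝ≥0∞ := fun ω p => A.indicator 1 (ω, p) with hF
  have step1 : ∀ ω, ENNReal.ofReal (f (W ω).1) * ENNReal.ofReal (g (W ω).2)
      = ∫⁻ p, F ω p ∂nu := by
    intro ω
    rw [← nu_prod]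
    have : ∀ p : ℝ × ℝ, F ω p = (Set.Iio (f (W ω).1) ×ˢ Set.Iio (g (W ω).2)).indicator 1 p := by
      intro p
      simp only [hF, hA, Set.indicator_apply, Set.mem_setOf_eq, Set.mem_prod, Set.mem_Iio, Pi.one_apply]
    simp only [this]
    exact (lintegral_indicator_one (measurableSet_Iio.prod measurableSet_Iio)).symm
  have step3 : ∀ p : ℝ × ℝ, ∫⁻ ω, F ω p ∂μ = μ {ω | p.1 < f (W ω).1 ∧ p.2 < g (W ω).2} := by
    intro p
    have : ∀ ω, F ω p = ({ω | p.1 < f (W ω).1 ∧ p.2 < g (W ω).2}).indicator 1 ω := by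
      intro ω
      simp only [hF, hA, Set.indicator_apply, Set.mem_setOf_eq, Pi.one_apply]
    simp only [this]
    refine lintegral_indicator_one ?_
    exact MeasurableSet.inter
      (measurableSet_lt measurable_const (hf.comp (measurable_fst.comp hW)))
      (measurableSet_lt measurable_const (hg.comp (measurable_snd.comp hW)))
  calc ∫⁻ ω, ENNReal.ofReal (f (W ω).1) * ENNReal.ofReal (g (W ω).2) ∂μ
      = ∫⁻ ω, ∫⁻ p, F ω p ∂nu ∂μ := by simp only [step1]
    _ = ∫⁻ p, ∫⁻ ω, F ω p ∂μ ∂nu := by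
        apply lintegral_lintegral_swap
        exact (Measurable.indicator measurable_const hAm).aemeasurable
    _ = _ := by simp only [step3]

lemma integral_le_of_lintegral_le {Ω : Type*} [MeasurableSpace Ω] (μ : Measure Ω)
    (F G : Ω → ℝ) (hF0 : ∀ ω, 0 ≤ F ω) (hG0 : ∀ ω, 0 ≤ G ω)
    (hFi : Integrable F μ) (hGi : Integrable G μ)
    (h : ∫⁻ ω, ENNReal.ofReal (F ω) ∂μ ≤ ∫⁻ ω, ENNReal.ofReal (G ω) ∂μ) :
    ∫ ω, F ω ∂μ ≤ ∫ ω, G ω ∂μ := by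
  rw [integral_eq_lintegral_of_nonneg_ae (Filter.Eventually.of_forall hF0) hFi.aestronglyMeasurable,
    integral_eq_lintegral_of_nonneg_ae (Filter.Eventually.of_forall hG0) hGi.aestronglyMeasurable]
  exact ENNReal.toReal_mono hGi.lintegral_lt_top.ne h

end UpperOrthantAux

/-- if `U ⪰_uo V` in the upper orthant order with equal first marginals,
`f` non-negative non-decreasing and `g` non-decreasing (possibly negative), with the
relevant products integrable, then `E[f(V₁)g(V₂)] ≤ E[f(U₁)g(U₂)]`. -/
theorem upper_orthant_expectation_ineq
    {Ω : Type*} [MeasurableSpace Ω] (μpr : Measure Ω) [IsProbabilityMeasure μpr]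
    (U V : Ω → ℝ × ℝ) (hU : Measurable U) (hV : Measurable V)
    (huo : ∀ t₁ t₂ : ℝ,
      μpr {ω | t₁ ≤ (V ω).1 ∧ t₂ ≤ (V ω).2} ≤ μpr {ω | t₁ ≤ (U ω).1 ∧ t₂ ≤ (U ω).2})
    (hmarg : Measure.map (fun ω => (U ω).1) μpr = Measure.map (fun ω => (V ω).1) μpr)
    (f g : ℝ → ℝ) (hfnn : ∀ x, 0 ≤ f x) (hfm : Monotone f) (hgm : Monotone g)
    (hUint : Integrable (fun ω => f (U ω).1 * g (U ω).2) μpr)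
    (hVint : Integrable (fun ω => f (V ω).1 * g (V ω).2) μpr) :
    ∫ ω, f (V ω).1 * g (V ω).2 ∂μpr ≤ ∫ ω, f (U ω).1 * g (U ω).2 ∂μpr := by
  set gp : ℝ → ℝ := fun y => max (g y) 0 with hgp_def
  set gm : ℝ → ℝ := fun y => max (-(g y)) 0 with hgm_def
  have hgp_mono : Monotone gp := hgm.max monotone_const
  have hgm_anti : Antitone gm := hgm.neg.max antitone_const
  have hgp_nn : ∀ y, 0 ≤ gp y := fun y => le_max_right _ _
  have hgm_nn : ∀ y, 0 ≤ gm y := fun y => le_max_right _ _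
  have hfprodp : ∀ (W : Ω → ℝ × ℝ),
      (fun ω => f (W ω).1 * gp (W ω).2) = fun ω => max (f (W ω).1 * g (W ω).2) 0 := by
    intro W; funext ω
    rw [hgp_def, mul_max_of_nonneg _ _ (hfnn _), mul_zero]
  have hfprodm : ∀ (W : Ω → ℝ × ℝ),
      (fun ω => f (W ω).1 * gm (W ω).2) = fun ω => max (-(f (W ω).1 * g (W ω).2)) 0 := by
    intro W; funext ω
    rw [hgm_def, mul_max_of_nonneg _ _ (hfnn _), mul_zero, mul_neg]
  have hUp : Integrable (fun ω => f (U ω).1 * gp (U ω).2) μpr := by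
    rw [hfprodp]; exact hUint.pos_part
  have hVp : Integrable (fun ω => f (V ω).1 * gp (V ω).2) μpr := by
    rw [hfprodp]; exact hVint.pos_part
  have hUm : Integrable (fun ω => f (U ω).1 * gm (U ω).2) μpr := by
    rw [hfprodm]; exact hUint.neg.pos_part
  have hVm : Integrable (fun ω => f (V ω).1 * gm (V ω).2) μpr := by
    rw [hfprodm]; exact hVint.neg.pos_part
  -- inequality for the positive part
  have ineq1 : ∫ ω, f (V ω).1 * gp (V ω).2 ∂μpr ≤ ∫ ω, f (U ω).1 * gp (U ω).2 ∂μpr := by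
    apply integral_le_of_lintegral_le μpr _ _
      (fun ω => mul_nonneg (hfnn _) (hgp_nn _)) (fun ω => mul_nonneg (hfnn _) (hgp_nn _)) hVp hUp
    simp_rw [fun (a b : ℝ) => ENNReal.ofReal_mul (p := f a) (q := gp b) (hfnn a)]
    rw [lint_rep μpr V hV f gp hfm.measurable hgp_mono.measurable,
      lint_rep μpr U hU f gp hfm.measurable hgp_mono.measurable]
    apply lintegral_mono
    intro p
    exact quad_key μpr U V huo {x | p.1 < f x} {x | p.2 < gp x}
      (fun x y hxy hx => lt_of_lt_of_le hx (hfm hxy))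
      (fun x y hxy hx => lt_of_lt_of_le hx (hgp_mono hxy))
  -- inequality for the negative part (reversed)
  have ineq2 : ∫ ω, f (U ω).1 * gm (U ω).2 ∂μpr ≤ ∫ ω, f (V ω).1 * gm (V ω).2 ∂μpr := by
    apply integral_le_of_lintegral_le μpr _ _
      (fun ω => mul_nonneg (hfnn _) (hgm_nn _)) (fun ω => mul_nonneg (hfnn _) (hgm_nn _)) hUm hVm
    simp_rw [fun (a b : ℝ) => ENNReal.ofReal_mul (p := f a) (q := gm b) (hfnn a)]
    rw [lint_rep μpr V hV f gm hfm.measurable hgm_anti.measurable,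
      lint_rep μpr U hU f gm hfm.measurable hgm_anti.measurable]
    apply lintegral_mono
    intro p
    exact quad_key2 μpr U V hU hV huo hmarg {x | p.1 < f x} {x | p.2 < gm x}
      (fun x y hxy hx => lt_of_lt_of_le hx (hfm hxy))
      (fun x y hxy hx => lt_of_lt_of_le hx (hgm_anti hxy))
  have hdecomp : ∀ (W : Ω → ℝ × ℝ),
      Integrable (fun ω => f (W ω).1 * gp (W ω).2) μpr →
      Integrable (fun ω => f (W ω).1 * gm (W ω).2) μpr →
      ∫ ω, f (W ω).1 * g (W ω).2 ∂μpr
        = ∫ ω, f (W ω).1 * gp (W ω).2 ∂μpr - ∫ ω, f (W ω).1 * gm (W ω).2 ∂μpr := by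
    intro W hWp hWm
    have heq : (fun ω => f (W ω).1 * g (W ω).2)
        = fun ω => f (W ω).1 * gp (W ω).2 - f (W ω).1 * gm (W ω).2 := by
      funext ω
      rw [← mul_sub, hgp_def, hgm_def]
      simp only [max_zero_sub_max_neg_zero_eq_self]
    rw [heq]
    exact integral_sub hWp hWm
  rw [hdecomp U hUp hUm, hdecomp V hVp hVm]
  exact sub_le_sub ineq1 ineq2
end

section
/- Assume there is a direction v* such that L(s(X,Y) | X^T v* ≥ τ) is increasing in stochastic order in τ, and for any u, t with P(X^T u ≥ t) ≥ P(X^T v* ≥ τ) we have L(s(X,Y) | X^T v* ≥ τ) ⪰ L(s(X,Y) | X^T u ≥ t). If X^T v* has a continuous distribution, then for every threshold q ∈ ℝ and δ ∈ (0,1), the worst coverage over halfspace shifts WC(C^{(q)}, R, δ; Q₀) := inf over unit vectors u and sets {x : x^T u ≥ t} with probability ≥ δ of Q₀(s(X,Y) ≤ q | X^T u ≥ t) is attained in direction v*; i.e., WC(C^{(q)}, R_{v*}, δ; Q₀) = inf_u WC(C^{(q)}, R_u, δ; Q₀). -/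
open MeasureTheory ProbabilityTheory
open scoped ENNReal

/-- Worst coverage over halfspace shifts in direction `u` of mass at least `δ`:
`WC(C^{(q)}, R_u, δ; Q₀) = inf{Q₀(s(X,Y) ≤ q | Xᵀu ≥ a) : Q₀(Xᵀu ≥ a) ≥ δ}`. -/
noncomputable def WCdir {Ω 𝒴 : Type*} [MeasurableSpace Ω] (μpr : Measure Ω) (d : ℕ)
    (X : Ω → Fin d → ℝ) (Y : Ω → 𝒴) (s : (Fin d → ℝ) → 𝒴 → ℝ) (q δ : ℝ)
    (u : Fin d → ℝ) : ℝ≥0∞ :=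
  sInf {p : ℝ≥0∞ | ∃ a : ℝ,
    ENNReal.ofReal δ ≤ μpr {ω | a ≤ ∑ i, X ω i * u i} ∧
    p = ProbabilityTheory.cond μpr {ω | a ≤ ∑ i, X ω i * u i}
          {ω | s (X ω) (Y ω) ≤ q}}


section aux
variable {Ω : Type*} [MeasurableSpace Ω] (μ : Measure Ω) [IsProbabilityMeasure μ]

/-- Existence of a quantile threshold for an atomless real random variable. -/
lemma exists_tau_aux (Z : Ω → ℝ) (hZ : Measurable Z)
    (hcont : ∀ c : ℝ, μ {ω | Z ω = c} = 0) (p : ℝ≥0∞) (hp0 : 0 < p) (hp1 : p < 1) :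
    ∃ τ : ℝ, μ {ω | τ ≤ Z ω} = p := by
  set f : ℝ → ℝ≥0∞ := fun τ => μ {ω | τ ≤ Z ω} with hf
  have hmeas : ∀ τ : ℝ, MeasurableSet {ω | τ ≤ Z ω} := fun τ =>
    hZ measurableSet_Ici
  have hanti : Antitone f := by
    intro a b hab
    exact measure_mono fun ω (h : b ≤ Z ω) => le_trans hab h
  -- nonempty
  have hne : ∃ τ : ℝ, p ≤ f τ := by
    have hU : (⋃ n : ℕ, {ω | (-(n:ℝ)) ≤ Z ω}) = Set.univ := by
      ext ω; simp only [Set.mem_iUnion, Set.mem_univ, iff_true]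
      obtain ⟨n, hn⟩ := exists_nat_ge (-(Z ω))
      exact ⟨n, show (-(n:ℝ)) ≤ Z ω by linarith⟩
    have hmono : Monotone fun n : ℕ => {ω | (-(n:ℝ)) ≤ Z ω} := by
      intro a b hab ω (h : _ ≤ Z ω)
      exact le_trans (by simp; exact_mod_cast hab) h
    have := hmono.measure_iUnion (μ := μ)
    rw [hU, measure_univ] at this
    have : p < ⨆ n : ℕ, μ {ω | (-(n:ℝ)) ≤ Z ω} := by rw [← this]; exact hp1
    obtain ⟨n, hn⟩ := lt_iSup_iff.mp this
    exact ⟨-(n:ℝ), hn.le⟩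
  -- bounded above
  have hbd : ∃ N : ℕ, f N < p := by
    have hI : (⋂ n : ℕ, {ω | (n:ℝ) ≤ Z ω}) = ∅ := by
      ext ω; simp only [Set.mem_iInter, Set.mem_empty_iff_false, iff_false, not_forall]
      obtain ⟨n, hn⟩ := exists_nat_gt (Z ω)
      exact ⟨n, by simp; linarith⟩
    have hantis : Antitone fun n : ℕ => {ω | (n:ℝ) ≤ Z ω} := by
      intro a b hab ω (h : _ ≤ Z ω)
      exact le_trans (by exact_mod_cast hab) h
    have := hantis.measure_iInter (μ := μ) (fun n => (hmeas _).nullMeasurableSet)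
      ⟨0, measure_ne_top _ _⟩
    rw [hI, measure_empty] at this
    have : ⨅ n : ℕ, μ {ω | (n:ℝ) ≤ Z ω} < p := by rw [← this]; exact hp0
    obtain ⟨n, hn⟩ := iInf_lt_iff.mp this
    exact ⟨n, hn⟩
  obtain ⟨N, hN⟩ := hbd
  set S : Set ℝ := {τ | p ≤ f τ} with hS
  have hSne : S.Nonempty := hne
  have hSbd : BddAbove S := by
    refine ⟨N, fun τ hτ => ?_⟩
    by_contra h
    push_neg at h
    exact absurd (le_trans hτ (hanti h.le)) (not_le.mpr hN)
  set τ0 := sSup S with hτ0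
  refine ⟨τ0, le_antisymm ?_ ?_⟩
  · -- f τ0 ≤ p
    have hsub : {ω | τ0 ≤ Z ω} ⊆ {ω | τ0 < Z ω} ∪ {ω | Z ω = τ0} := by
      intro ω (h : τ0 ≤ Z ω)
      rcases lt_or_eq_of_le h with h' | h'
      · exact Or.inl h'
      · exact Or.inr h'.symm
    have h1 : μ {ω | τ0 ≤ Z ω} ≤ μ {ω | τ0 < Z ω} := by
      calc μ {ω | τ0 ≤ Z ω} ≤ μ ({ω | τ0 < Z ω} ∪ {ω | Z ω = τ0}) := measure_mono hsub
        _ ≤ μ {ω | τ0 < Z ω} + μ {ω | Z ω = τ0} := measure_union_le _ _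
        _ = μ {ω | τ0 < Z ω} := by rw [hcont τ0, add_zero]
    have hU : {ω | τ0 < Z ω} = ⋃ n : ℕ, {ω | τ0 + 1/(n+1 : ℝ) ≤ Z ω} := by
      ext ω
      simp only [Set.mem_setOf_eq, Set.mem_iUnion]
      constructor
      · intro h
        obtain ⟨n, hn⟩ := exists_nat_one_div_lt (sub_pos.mpr h)
        exact ⟨n, by push_cast at hn ⊢; linarith⟩
      · rintro ⟨n, hn⟩
        have : (0:ℝ) < 1/(n+1 : ℝ) := by positivity
        linarith
    have hmono : Monotone fun n : ℕ => {ω | τ0 + 1/(n+1 : ℝ) ≤ Z ω} := by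
      intro a b hab ω (h : _ ≤ Z ω)
      have : (1:ℝ)/(b+1) ≤ 1/(a+1) := by
        apply one_div_le_one_div_of_le (by positivity)
        exact_mod_cast by omega
      exact le_trans (by simpa using this) h
    have h2 : μ {ω | τ0 < Z ω} = ⨆ n : ℕ, f (τ0 + 1/(n+1 : ℝ)) := by
      rw [hU]; exact hmono.measure_iUnion
    have h3 : ∀ n : ℕ, f (τ0 + 1/(n+1 : ℝ)) ≤ p := by
      intro n
      have hnot : τ0 + 1/(n+1 : ℝ) ∉ S := by
        intro hmem
        have := le_csSup hSbd hmem
        have hpos : (0:ℝ) < 1/(n+1 : ℝ) := by positivity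
        linarith
      exact (not_le.mp hnot).le
    calc f τ0 ≤ μ {ω | τ0 < Z ω} := h1
      _ = ⨆ n : ℕ, f (τ0 + 1/(n+1 : ℝ)) := h2
      _ ≤ p := iSup_le h3
  · -- p ≤ f τ0
    have hI : {ω | τ0 ≤ Z ω} = ⋂ n : ℕ, {ω | τ0 - 1/(n+1 : ℝ) ≤ Z ω} := by
      ext ω
      simp only [Set.mem_setOf_eq, Set.mem_iInter]
      constructor
      · intro h n
        have : (0:ℝ) < 1/(n+1 : ℝ) := by positivity
        linarith
      · intro h
        by_contra hc
        push_neg at hc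
        obtain ⟨n, hn⟩ := exists_nat_one_div_lt (sub_pos.mpr hc)
        have := h n
        push_cast at hn this
        linarith
    have hantis : Antitone fun n : ℕ => {ω | τ0 - 1/(n+1 : ℝ) ≤ Z ω} := by
      intro a b hab ω (h : _ ≤ Z ω)
      have : (1:ℝ)/(b+1) ≤ 1/(a+1) := by
        apply one_div_le_one_div_of_le (by positivity)
        exact_mod_cast by omega
      refine le_trans ?_ h
      show τ0 - 1/(a+1:ℝ) ≤ τ0 - 1/(b+1:ℝ)
      linarith
    have h2 : f τ0 = ⨅ n : ℕ, f (τ0 - 1/(n+1 : ℝ)) := by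
      show μ {ω | τ0 ≤ Z ω} = _
      rw [hI]
      exact hantis.measure_iInter (fun n => (hmeas _).nullMeasurableSet)
        ⟨0, measure_ne_top _ _⟩
    have h3 : ∀ n : ℕ, p ≤ f (τ0 - 1/(n+1 : ℝ)) := by
      intro n
      have hlt : τ0 - 1/(n+1 : ℝ) < τ0 := by
        have : (0:ℝ) < 1/(n+1 : ℝ) := by positivity
        linarith
      obtain ⟨τ, hτS, hττ⟩ := exists_lt_of_lt_csSup hSne hlt
      exact le_trans hτS (hanti hττ.le)
    show p ≤ f τ0
    rw [h2]
    exact le_iInf h3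

/-- Tail-dominance transfers to lower sets for conditional measures. -/
lemma cond_le_aux (A B : Set Ω) (hA : MeasurableSet A) (hB : MeasurableSet B)
    (hApos : μ A ≠ 0) (hBpos : μ B ≠ 0)
    (W : Ω → ℝ) (hW : Measurable W) (q : ℝ)
    (h : ∀ r : ℝ, μ[|B] {ω | r ≤ W ω} ≤ μ[|A] {ω | r ≤ W ω}) :
    μ[|A] {ω | W ω ≤ q} ≤ μ[|B] {ω | W ω ≤ q} := by
  have hPA : IsProbabilityMeasure μ[|A] := cond_isProbabilityMeasure hApos
  have hPB : IsProbabilityMeasure μ[|B] := cond_isProbabilityMeasure hBpos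
  have hmeasq : MeasurableSet {ω | W ω ≤ q} := hW measurableSet_Iic
  have hU : {ω | q < W ω} = ⋃ n : ℕ, {ω | q + 1/(n+1 : ℝ) ≤ W ω} := by
    ext ω
    simp only [Set.mem_setOf_eq, Set.mem_iUnion]
    constructor
    · intro hq
      obtain ⟨n, hn⟩ := exists_nat_one_div_lt (sub_pos.mpr hq)
      exact ⟨n, by push_cast at hn ⊢; linarith⟩
    · rintro ⟨n, hn⟩
      have : (0:ℝ) < 1/(n+1 : ℝ) := by positivity
      linarith
  have hmono : Monotone fun n : ℕ => {ω | q + 1/(n+1 : ℝ) ≤ W ω} := by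
    intro a b hab ω (hw : _ ≤ W ω)
    have : (1:ℝ)/(b+1) ≤ 1/(a+1) := by
      apply one_div_le_one_div_of_le (by positivity)
      exact_mod_cast by omega
    exact le_trans (by simpa using this) hw
  have hBA : μ[|B] {ω | q < W ω} ≤ μ[|A] {ω | q < W ω} := by
    rw [hU, hmono.measure_iUnion (μ := μ[|B]), hmono.measure_iUnion (μ := μ[|A])]
    exact iSup_mono fun n => h _
  have hcompl : {ω | W ω ≤ q} = {ω | q < W ω}ᶜ := by
    ext ω; simp [not_lt]
  have hmeasgt : MeasurableSet {ω | q < W ω} := hW measurableSet_Ioi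
  rw [hcompl, prob_compl_eq_one_sub hmeasgt, prob_compl_eq_one_sub hmeasgt]
  exact tsub_le_tsub_left hBA 1

end aux

/-- under the stochastic dominance assumption in direction `v*`
(conditional laws of the score increase along `v*`-halfspaces, and `v*`-halfspaces
dominate all equally-probable halfspaces), with `Xᵀv*` continuously distributed, the
worst coverage over all halfspace shifts of mass `≥ δ` is attained in direction `v*`. -/
theorem worst_coverage_attained_at_vstar
    {Ω 𝒴 : Type*} [MeasurableSpace Ω] [MeasurableSpace 𝒴]
    (μpr : Measure Ω) [IsProbabilityMeasure μpr]
    (d : ℕ) (X : Ω → Fin d → ℝ) (Y : Ω → 𝒴) (hX : Measurable X) (hY : Measurable Y)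
    (s : (Fin d → ℝ) → 𝒴 → ℝ) (hs : Measurable fun p : (Fin d → ℝ) × 𝒴 => s p.1 p.2)
    (vstar : Fin d → ℝ) (hvstar : ∑ i, vstar i ^ 2 = 1)
    (hmonotau : ∀ τ τ' : ℝ, τ ≤ τ' → 0 < μpr {ω | τ' ≤ ∑ i, X ω i * vstar i} →
      ∀ r : ℝ,
        ProbabilityTheory.cond μpr {ω | τ ≤ ∑ i, X ω i * vstar i}
            {ω | r ≤ s (X ω) (Y ω)}
          ≤ ProbabilityTheory.cond μpr {ω | τ' ≤ ∑ i, X ω i * vstar i}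
              {ω | r ≤ s (X ω) (Y ω)})
    (hdom : ∀ u : Fin d → ℝ, (∑ i, u i ^ 2 = 1) → ∀ t τ : ℝ,
      0 < μpr {ω | τ ≤ ∑ i, X ω i * vstar i} →
      μpr {ω | τ ≤ ∑ i, X ω i * vstar i} ≤ μpr {ω | t ≤ ∑ i, X ω i * u i} →
      ∀ r : ℝ,
        ProbabilityTheory.cond μpr {ω | t ≤ ∑ i, X ω i * u i}
            {ω | r ≤ s (X ω) (Y ω)}
          ≤ ProbabilityTheory.cond μpr {ω | τ ≤ ∑ i, X ω i * vstar i}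
              {ω | r ≤ s (X ω) (Y ω)})
    (hcontv : ∀ c : ℝ, μpr {ω | ∑ i, X ω i * vstar i = c} = 0)
    (q : ℝ) (δ : ℝ) (hδ : δ ∈ Set.Ioo (0 : ℝ) 1) :
    (⨅ u ∈ {u : Fin d → ℝ | ∑ i, u i ^ 2 = 1}, WCdir μpr d X Y s q δ u)
      = WCdir μpr d X Y s q δ vstar := by
  have hW : Measurable fun ω => s (X ω) (Y ω) := hs.comp (hX.prodMk hY)
  have hZ : Measurable fun ω => ∑ i, X ω i * vstar i :=
    Finset.measurable_sum _ fun i _ => ((measurable_pi_apply i).comp hX).mul_const _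
  obtain ⟨τ0, hτ0⟩ := exists_tau_aux μpr (fun ω => ∑ i, X ω i * vstar i) hZ hcontv
    (ENNReal.ofReal δ) (ENNReal.ofReal_pos.mpr hδ.1) (ENNReal.ofReal_lt_one.mpr hδ.2)
  have hApos : μpr {ω | τ0 ≤ ∑ i, X ω i * vstar i} ≠ 0 := by
    rw [hτ0]; exact (ENNReal.ofReal_pos.mpr hδ.1).ne'
  have hAmeas : MeasurableSet {ω | τ0 ≤ ∑ i, X ω i * vstar i} := hZ measurableSet_Ici
  apply le_antisymm
  · exact biInf_le _ hvstar
  · apply le_iInf₂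
    intro u hu
    apply le_sInf
    rintro p ⟨a, ha, rfl⟩
    have hZu : Measurable fun ω => ∑ i, X ω i * u i :=
      Finset.measurable_sum _ fun i _ => ((measurable_pi_apply i).comp hX).mul_const _
    have hBmeas : MeasurableSet {ω | a ≤ ∑ i, X ω i * u i} := hZu measurableSet_Ici
    have hAB : μpr {ω | τ0 ≤ ∑ i, X ω i * vstar i} ≤ μpr {ω | a ≤ ∑ i, X ω i * u i} := by
      rw [hτ0]; exact ha
    have hBpos : μpr {ω | a ≤ ∑ i, X ω i * u i} ≠ 0 :=
      fun h => hApos (le_antisymm (h ▸ hAB) zero_le)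
    have hdom' := hdom u hu a τ0 (pos_iff_ne_zero.mpr hApos) hAB
    have hcomp := cond_le_aux μpr _ _ hAmeas hBmeas hApos hBpos
      (fun ω => s (X ω) (Y ω)) hW q hdom'
    exact le_trans (sInf_le ⟨τ0, le_of_eq hτ0.symm, rfl⟩) hcomp
end
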